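/- Suppose that for some function h : ℝ₊ → ℝ₊ one has c_{x,y}(ω) ≤ h(|u−v|) for any u,v ∈ ℤ^d and any x,y ∈ ω̂ with x ∈ u + [0,1]^d and y ∈ v + [0,1]^d. If E[ω̂([0,1]^d)³] < ∞ and Σ_{u∈ℤ^d} h(|u|) < ∞, then assumption (A6) holds, i.e. F_*(ω) := ∫dω̂(y)∫dω̂(z) c_{0,y}(ω) c_{y,z}(ω) belongs to L¹(𝒫₀). -/

import Mathlib

open MeasureTheory Filter Topology ENNReal

noncomputable section

namespace RWMPP

/-- Points of `ℝ^d`. -/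
abbrev Pt (d : ℕ) := Fin d → ℝ

/-- Euclidean norm on `ℝ^d`. -/
def ptNorm {d : ℕ} (x : Pt d) : ℝ := Real.sqrt (∑ i, x i ^ 2)

/-- Configurations: counting measures on `ℝ^d × S` (marked point configurations are
identified with the associated counting measures). -/
abbrev Cfg (d : ℕ) (S : Type*) [MeasurableSpace S] := MeasureTheory.Measure (Pt d × S)

variable {d : ℕ} {S : Type*} [MeasurableSpace S]

/-- Translation `τ_x ω = {(x_i - x, s_i)}`. -/
def shift (x : Pt d) (ω : Cfg d S) : Cfg d S := ω.map fun p => (p.1 - x, p.2)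

/-- The spatial support `ω̂`, as a counting measure on `ℝ^d`. -/
def hat (ω : Cfg d S) : Measure (Pt d) := ω.map Prod.fst

/-- `x ∈ ω̂`. -/
def inSupp (ω : Cfg d S) (x : Pt d) : Prop := hat ω {x} ≠ 0

/-- `ω` is a locally finite simple marked configuration (at most one mark per point). -/
def IsConfig (ω : Cfg d S) : Prop :=
  ∃ X : Set (Pt d × S), X.Countable ∧ Set.InjOn Prod.fst X ∧
    (∀ r : ℝ, (X ∩ {p | ptNorm p.1 ≤ r}).Finite) ∧
    ω = Measure.sum fun p : X => Measure.dirac (p : Pt d × S)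

/-- The unit cube `[0,1]^d`. -/
def unitCube (d : ℕ) : Set (Pt d) := {x | ∀ i, 0 ≤ x i ∧ x i ≤ 1}

/-- The basic setting: a stationary ergodic marked simple point process `P` with
finite positive intensity (assumptions (A1), (A2)), its Palm distribution `P0`
(characterized by the Campbell-type identity `palm`), and nonnegative measurable
jump rates `c`. -/
structure Setting (d : ℕ) (S : Type*) [MeasurableSpace S] [TopologicalSpace S]
    [PolishSpace S] [BorelSpace S] where
  P : Measure (Cfg d S)
  P0 : Measure (Cfg d S)
  c : Pt d → Pt d → Cfg d S → ℝ
  isProb : IsProbabilityMeasure P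
  isProb0 : IsProbabilityMeasure P0
  config_ae : ∀ᵐ ω ∂P, IsConfig ω
  stationary : ∀ x : Pt d, P.map (shift x) = P
  ergodic : ∀ A : Set (Cfg d S), MeasurableSet A → (∀ x : Pt d, shift x ⁻¹' A = A) →
    P A = 0 ∨ P A = 1
  c_nonneg : ∀ x y ω, 0 ≤ c x y ω
  c_meas : Measurable fun q : Pt d × Pt d × Cfg d S => c q.1 q.2.1 q.2.2
  intensity_pos : 0 < ∫⁻ ω, hat ω (unitCube d) ∂P
  intensity_ne_top : (∫⁻ ω, hat ω (unitCube d) ∂P) ≠ ⊤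
  palm : ∀ A : Set (Cfg d S), MeasurableSet A →
    (∫⁻ ω, hat ω (unitCube d) ∂P) * P0 A =
      ∫⁻ ω, ∫⁻ x in unitCube d, A.indicator (fun _ => (1 : ℝ≥0∞)) (shift x ω) ∂hat ω ∂P
  palm_supp : ∀ᵐ ω ∂P0, inSupp ω 0

variable [TopologicalSpace S] [PolishSpace S] [BorelSpace S]

/-- The intensity `m`. -/
def Setting.intensity (E : Setting d S) : ℝ := (∫⁻ ω, hat ω (unitCube d) ∂E.P).toReal

/-- `λ_k(ω) = ∫ dω̂(x) c_{0,x}(ω) |x|^k`. -/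
def Setting.lambdaFn (E : Setting d S) (k : ℕ) (ω : Cfg d S) : ℝ :=
  ∫ x, E.c 0 x ω * ptNorm x ^ k ∂hat ω

/-- `F_*(ω) = ∫dω̂(y) ∫dω̂(z) c_{0,y}(ω) c_{y,z}(ω)`. -/
def Setting.Fstar (E : Setting d S) (ω : Cfg d S) : ℝ :=
  ∫ y, ∫ z, E.c 0 y ω * E.c y z ω ∂hat ω ∂hat ω

/-- Assumption (A3). -/
def A3 (E : Setting d S) : Prop := ∀ᵐ ω ∂E.P, ∀ x y : Pt d,
  inSupp ω x → inSupp ω y → x ≠ y → shift x ω ≠ shift y ω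

/-- Assumption (A4): symmetry and covariance of the rates. -/
def A4 (E : Setting d S) : Prop :=
  (∀ ω x y, inSupp ω x → inSupp ω y → E.c x y ω = E.c y x ω) ∧
  ∀ ω x y (a : Pt d), inSupp ω x → inSupp ω y → E.c x y ω = E.c (x - a) (y - a) (shift a ω)

/-- Assumption (A5): `λ₀, λ₁ ∈ L²(P₀)`, `λ₂ ∈ L¹(P₀)`. -/
def A5 (E : Setting d S) : Prop :=
  MemLp (E.lambdaFn 0) 2 E.P0 ∧ MemLp (E.lambdaFn 1) 2 E.P0 ∧ Integrable (E.lambdaFn 2) E.P0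

/-- Assumption (A6): `F_* ∈ L¹(P₀)`. -/
def A6 (E : Setting d S) : Prop := Integrable E.Fstar E.P0

/-- Assumption (A7): a.s. irreducibility of the rates on `ω̂`. -/
def A7 (E : Setting d S) : Prop := ∀ᵐ ω ∂E.P, ∀ x y : Pt d, inSupp ω x → inSupp ω y →
  ∃ (n : ℕ) (γ : Fin (n + 1) → Pt d), γ 0 = x ∧ γ (Fin.last n) = y ∧
    (∀ i, inSupp ω (γ i)) ∧ ∀ i : Fin n, 0 < E.c (γ i.castSucc) (γ i.succ) ω

/-- The microscopic measure `μ^ε_ω = ε^d Σ_{a∈ω̂} δ_{εa}`. -/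
def muEps (ω : Cfg d S) (ε : ℝ) : Measure (Pt d) :=
  ENNReal.ofReal (ε ^ d) • (hat ω).map fun a => ε • a

/-- The microscopic measure `ν^ε_ω = ε^d Σ_{a,b∈ω̂} c_{a,b}(ω) δ_{(εa, b-a)}`. -/
def nuEps (c : Pt d → Pt d → Cfg d S → ℝ) (ω : Cfg d S) (ε : ℝ) : Measure (Pt d × Pt d) :=
  ENNReal.ofReal (ε ^ d) •
    ((((hat ω).prod (hat ω)).withDensity fun q => ENNReal.ofReal (c q.1 q.2 ω)).map
      fun q => (ε • q.1, q.2 - q.1))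

/-- The microscopic gradient `∇_ε v (x,z) = (v(x+εz) - v(x))/ε`. -/
def gradEps {d : ℕ} (ε : ℝ) (v : Pt d → ℝ) (q : Pt d × Pt d) : ℝ :=
  (v (q.1 + ε • q.2) - v q.1) / ε

/-- `v ∈ H¹_{ω,ε}`. -/
def MemH1 (c : Pt d → Pt d → Cfg d S → ℝ) (ω : Cfg d S) (ε : ℝ) (v : Pt d → ℝ) : Prop :=
  MemLp v 2 (muEps ω ε) ∧ MemLp (gradEps ε v) 2 (nuEps c ω ε)

/-- Weak convergence of a family `v_ε ∈ L²(μ^ε_ω)` to `v ∈ L²(m dx)`. -/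
structure WeakConv (m : ℝ) (ω : Cfg d S) (v : ℝ → Pt d → ℝ) (vlim : Pt d → ℝ) : Prop where
  mem : ∀ᶠ ε in 𝓝[>] (0 : ℝ), MemLp (v ε) 2 (muEps ω ε)
  bdd : ∃ C : ℝ, ∀ᶠ ε in 𝓝[>] (0 : ℝ), ∫ x, v ε x ^ 2 ∂muEps ω ε ≤ C
  tendsto : ∀ φ : Pt d → ℝ, Continuous φ → HasCompactSupport φ →
    Tendsto (fun ε => ∫ x, v ε x * φ x ∂muEps ω ε) (𝓝[>] (0 : ℝ))
      (𝓝 (m * ∫ x, vlim x * φ x))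

/-- Strong convergence of a family `v_ε ∈ L²(μ^ε_ω)` to `v ∈ L²(m dx)`. -/
structure StrongConv (m : ℝ) (ω : Cfg d S) (v : ℝ → Pt d → ℝ) (vlim : Pt d → ℝ) : Prop where
  mem : ∀ᶠ ε in 𝓝[>] (0 : ℝ), MemLp (v ε) 2 (muEps ω ε)
  bdd : ∃ C : ℝ, ∀ᶠ ε in 𝓝[>] (0 : ℝ), ∫ x, v ε x ^ 2 ∂muEps ω ε ≤ C
  tendsto : ∀ (g : ℝ → Pt d → ℝ) (glim : Pt d → ℝ), WeakConv m ω g glim →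
    Tendsto (fun ε => ∫ x, v ε x * g ε x ∂muEps ω ε) (𝓝[>] (0 : ℝ))
      (𝓝 (m * ∫ x, vlim x * glim x))

/-- Euclidean scalar product. -/
def dotv {d : ℕ} (a b : Pt d) : ℝ := ∑ i, a i * b i

/-- The variational formula `a ↦ a · D a` for the effective diffusion matrix. -/
def Setting.Dform (E : Setting d S) (a : Pt d) : ℝ :=
  sInf {r : ℝ | ∃ f : Cfg d S → ℝ, Measurable f ∧ (∃ M : ℝ, ∀ ω, |f ω| ≤ M) ∧
    r = (1 / 2) * ∫ ω, (∫ x, E.c 0 x ω * (dotv a x - (f (shift x ω) - f ω)) ^ 2 ∂hat ω) ∂E.P0}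

/-- The `i`-th canonical basis vector. -/
def unitVec (d : ℕ) (i : Fin d) : Pt d := fun j => if j = i then 1 else 0

/-- `D` is the effective diffusion matrix and the coordinates are chosen so that
`e₁, …, e_{d*}` span the positive eigenspaces of `D` and the remaining coordinates
span its kernel. -/
structure IsEffMatrix (E : Setting d S) (D : Matrix (Fin d) (Fin d) ℝ) (dstar : ℕ) : Prop where
  symm : D.IsSymm
  quad : ∀ a : Pt d, dotv a (D.mulVec a) = E.Dform a
  dstar_le : dstar ≤ d
  ker : ∀ i : Fin d, dstar ≤ i.val → D.mulVec (unitVec d i) = 0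
  pos : ∀ a : Pt d, (∀ i : Fin d, dstar ≤ i.val → a i = 0) → a ≠ 0 → 0 < dotv a (D.mulVec a)

/-- `u ∈ H¹_*(m dx)` with `∇_* u = gu` (weak partial derivatives in the first
`d*` coordinates, the remaining components vanishing). -/
def IsStarGradient (dstar : ℕ) (u : Pt d → ℝ) (gu : Pt d → Pt d) : Prop :=
  MemLp u 2 (volume : Measure (Pt d)) ∧ MemLp gu 2 (volume : Measure (Pt d)) ∧
  (∀ x, ∀ i : Fin d, dstar ≤ i.val → gu x i = 0) ∧
  ∀ i : Fin d, i.val < dstar → ∀ φ : Pt d → ℝ, ContDiff ℝ (⊤ : ℕ∞) φ → HasCompactSupport φ →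
    ∫ x, u x * fderiv ℝ φ x (unitVec d i) = -∫ x, gu x i * φ x

/-- Weak solution `u ∈ H¹_*(m dx)` of `-∇_*·D∇_* u + λ u = f`. -/
def IsEffWeakSol (D : Matrix (Fin d) (Fin d) ℝ) (dstar : ℕ) (lam : ℝ)
    (f u : Pt d → ℝ) (gu : Pt d → Pt d) : Prop :=
  IsStarGradient dstar u gu ∧
  ∀ (v : Pt d → ℝ) (gv : Pt d → Pt d), IsStarGradient dstar v gv →
    (∫ x, dotv (D.mulVec (gu x)) (gv x)) + lam * ∫ x, u x * v x = ∫ x, f x * v x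

/-- Weak solution `u ∈ H¹_{ω,ε}` of `-𝕃^ε_ω u + λ u = f`. -/
def IsEpsWeakSol (c : Pt d → Pt d → Cfg d S → ℝ) (ω : Cfg d S) (ε lam : ℝ)
    (f u : Pt d → ℝ) : Prop :=
  MemH1 c ω ε u ∧
  ∀ v : Pt d → ℝ, MemH1 c ω ε v →
    (1 / 2) * (∫ q, gradEps ε v q * gradEps ε u q ∂nuEps c ω ε) +
      lam * ∫ x, v x * u x ∂muEps ω ε = ∫ x, v x * f x ∂muEps ω ε

/-- `∇_* φ` for a differentiable `φ`. -/
def gradStar (dstar : ℕ) (φ : Pt d → ℝ) (x : Pt d) : Pt d :=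
  fun i => if i.val < dstar then fderiv ℝ φ x (unitVec d i) else 0

/-- Weak convergence of the flows `∇_ε v_ε` to `w`. -/
structure WeakFlowConv (m : ℝ) (D : Matrix (Fin d) (Fin d) ℝ) (dstar : ℕ)
    (c : Pt d → Pt d → Cfg d S → ℝ) (ω : Cfg d S)
    (v : ℝ → Pt d → ℝ) (w : Pt d → Pt d) : Prop where
  bdd : ∃ C : ℝ, ∀ᶠ ε in 𝓝[>] (0 : ℝ), ∫ q, gradEps ε (v ε) q ^ 2 ∂nuEps c ω ε ≤ C
  tendsto : ∀ φ : Pt d → ℝ, ContDiff ℝ 1 φ → HasCompactSupport φ →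
    Tendsto (fun ε => (1 / 2) * ∫ q, gradEps ε (v ε) q * gradEps ε φ q ∂nuEps c ω ε)
      (𝓝[>] (0 : ℝ)) (𝓝 (m * ∫ x, dotv (D.mulVec (w x)) (gradStar dstar φ x)))

/-- Strong convergence of the flows `∇_ε v_ε` to `w`. -/
structure StrongFlowConv (m : ℝ) (D : Matrix (Fin d) (Fin d) ℝ) (dstar : ℕ)
    (c : Pt d → Pt d → Cfg d S → ℝ) (ω : Cfg d S)
    (v : ℝ → Pt d → ℝ) (w : Pt d → Pt d) : Prop where
  bdd : ∃ C : ℝ, ∀ᶠ ε in 𝓝[>] (0 : ℝ), ∫ q, gradEps ε (v ε) q ^ 2 ∂nuEps c ω ε ≤ C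
  tendsto : ∀ (g : ℝ → Pt d → ℝ) (glim : Pt d → ℝ) (gg : Pt d → Pt d),
    (∀ ε, 0 < ε → MemH1 c ω ε (g ε)) → WeakConv m ω g glim → IsStarGradient dstar glim gg →
    Tendsto (fun ε => (1 / 2) * ∫ q, gradEps ε (v ε) q * gradEps ε (g ε) q ∂nuEps c ω ε)
      (𝓝[>] (0 : ℝ)) (𝓝 (m * ∫ x, dotv (D.mulVec (w x)) (gg x)))

/-- The generator `𝕃^ε_ω` evaluated at a point `εa` of `εω̂`. -/
def genEps (c : Pt d → Pt d → Cfg d S → ℝ) (ω : Cfg d S) (ε : ℝ)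
    (f : Pt d → ℝ) (a : Pt d) : ℝ :=
  (ε ^ 2)⁻¹ * ∫ y, c a y ω * (f (ε • y) - f (ε • a)) ∂hat ω

/-- `P` is the Markov semigroup `e^{t𝕃^ε_ω}` of the random walk on `εω̂` with jump
rates `ε^{-2} c_{y,z}(ω)` (characterized by the semigroup property, contractivity and
the Kolmogorov equation). -/
structure IsRWSemigroup (c : Pt d → Pt d → Cfg d S → ℝ) (ω : Cfg d S) (ε : ℝ)
    (P : ℝ → (Pt d → ℝ) → Pt d → ℝ) : Prop where
  init : ∀ f, P 0 f = f
  meas : ∀ t, 0 ≤ t → ∀ f : Pt d → ℝ, Measurable f → Measurable (P t f)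
  contraction : ∀ (f : Pt d → ℝ) (M : ℝ), (∀ x, |f x| ≤ M) → ∀ t, 0 ≤ t → ∀ x, |P t f x| ≤ M
  semigroup : ∀ s t : ℝ, 0 ≤ s → 0 ≤ t → ∀ f : Pt d → ℝ, Measurable f → (∃ M, ∀ x, |f x| ≤ M) →
    ∀ a : Pt d, inSupp ω a → P (s + t) f (ε • a) = P s (P t f) (ε • a)
  kolmogorov : ∀ f : Pt d → ℝ, Measurable f → (∃ M, ∀ x, |f x| ≤ M) →
    ∀ a : Pt d, inSupp ω a → ∀ t : ℝ, 0 < t →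
      HasDerivAt (fun s => P s f (ε • a)) (genEps c ω ε (P t f) a) t

/-- Gaussian transition kernel (as a function of the increment) of Brownian motion on
`ℝ^n` with (nondegenerate) diffusion matrix `A`. -/
def gaussKernel (n : ℕ) (A : Matrix (Fin n) (Fin n) ℝ) (t : ℝ) (z : Pt n) : ℝ :=
  (Real.sqrt ((2 * Real.pi * t) ^ n * A.det))⁻¹ *
    Real.exp (-dotv z (A⁻¹.mulVec z) / (2 * t))

/-- Inclusion of `ℝ^{d*}` into the first `d*` coordinates of `ℝ^d`. -/
def inclStar {d : ℕ} (dstar : ℕ) (z : Pt dstar) : Pt d :=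
  fun i => if h : i.val < dstar then z ⟨i.val, h⟩ else 0

/-- The effective semigroup `P_t` of the (possibly degenerate) Brownian motion with
diffusion matrix `2D`: `P_t f(x',x'') = ∫ p_t(x',y) f(y,x'') dy`. -/
def effSemigroup (D : Matrix (Fin d) (Fin d) ℝ) (dstar : ℕ) (h : dstar ≤ d)
    (t : ℝ) (f : Pt d → ℝ) (x : Pt d) : ℝ :=
  ∫ z : Pt dstar,
    gaussKernel dstar (Matrix.of fun i j => 2 * D (Fin.castLE h i) (Fin.castLE h j)) t z *
      f (x + inclStar dstar z)

/-- The measure `ν` on `Ω₀ × ℝ^d`: `∫ g dν = ∫ dP₀(ω) ∫ dω̂(z) c_{0,z}(ω) g(ω,z)`. -/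
def nuMeas (E : Setting d S) : Measure (Cfg d S × Pt d) :=
  E.P0.bind fun ω => ((hat ω).withDensity fun z => ENNReal.ofReal (E.c 0 z ω)).map fun z => (ω, z)

/-- The gradient `∇u(ω,z) = u(τ_z ω) - u(ω)`. -/
def gradP (u : Cfg d S → ℝ) (q : Cfg d S × Pt d) : ℝ := u (shift q.2 q.1) - u q.1

/-- The divergence of a square integrable form. -/
def Setting.divP (E : Setting d S) (v : Cfg d S × Pt d → ℝ) (ω : Cfg d S) : ℝ :=
  ∫ z, E.c 0 z ω * (v (ω, z) - v (shift z ω, -z)) ∂hat ω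

/-- `v ∈ L²_pot(ν)`: `v` lies in the `L²(ν)`-closure of gradients of bounded Borel
functions. -/
def IsPotForm (E : Setting d S) (v : Cfg d S × Pt d → ℝ) : Prop :=
  MemLp v 2 (nuMeas E) ∧ ∀ δ : ℝ, 0 < δ → ∃ u : Cfg d S → ℝ, Measurable u ∧
    (∃ M : ℝ, ∀ ω, |u ω| ≤ M) ∧
    eLpNorm (fun q => v q - gradP u q) 2 (nuMeas E) < ENNReal.ofReal δ

/-- `b ∈ L²_sol(ν) = L²_pot(ν)^⊥`. -/
def IsSolForm (E : Setting d S) (b : Cfg d S × Pt d → ℝ) : Prop :=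
  MemLp b 2 (nuMeas E) ∧ ∀ v, IsPotForm E v → ∫ q, b q * v q ∂nuMeas E = 0

/-- The quadratic form `q(a) = inf_{v ∈ L²_pot(ν)} ½∫(a·z + v)² dν`. -/
def Setting.qForm (E : Setting d S) (a : Pt d) : ℝ :=
  sInf {r : ℝ | ∃ v, IsPotForm E v ∧ r = (1 / 2) * ∫ q, (dotv a q.2 + v q) ^ 2 ∂nuMeas E}

/-- `η_b = ∫ dν(ω,z) b(ω,z) z`. -/
def etaOf (E : Setting d S) (b : Cfg d S × Pt d → ℝ) : Pt d :=
  fun i => ∫ q, b q * q.2 i ∂nuMeas E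

open Classical in
/-- The transformation `b̃(ω,z) = b(τ_z ω, -z)` for `z ∈ ω̂`, `0` otherwise. -/
def tildeF (b : Cfg d S × Pt d → ℝ) (q : Cfg d S × Pt d) : ℝ :=
  if inSupp q.1 q.2 then b (shift q.2 q.1, -q.2) else 0

/-- The cube `k + [0,1)^d` for `k ∈ ℤ^d`. -/
def zcube {d : ℕ} (k : Fin d → ℤ) : Set (Pt d) := {x | ∀ i, (k i : ℝ) ≤ x i ∧ x i < (k i : ℝ) + 1}

/-- `N_k(ω) = ω̂(k + [0,1)^d)`, as a real number. -/
def NkR (ω : Cfg d S) (k : Fin d → ℤ) : ℝ := (hat ω (zcube k)).toReal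

/-- The covariance `Cov(N_k, N_{k'})` under `P`. -/
def covN (E : Setting d S) (k k' : Fin d → ℤ) : ℝ :=
  (∫ ω, NkR ω k * NkR ω k' ∂E.P) - (∫ ω, NkR ω k ∂E.P) * ∫ ω, NkR ω k' ∂E.P

/-- Euclidean distance on `ℤ^d`. -/
def zdist {d : ℕ} (k k' : Fin d → ℤ) : ℝ := Real.sqrt (∑ i, ((k i - k' i : ℤ) : ℝ) ^ 2)

/-- Condition (i): a.s. uniformly bounded cube counts. -/
def CondI (E : Setting d S) : Prop :=
  ∀ᵐ ω ∂E.P, ∃ C : ℝ≥0∞, C ≠ ⊤ ∧ ∀ k : Fin d → ℤ, hat ω (zcube k) ≤ C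

/-- Condition (ii): `E[N₀²] < ∞` and polynomial decay of covariances of cube counts. -/
def CondII (E : Setting d S) : Prop :=
  (∫⁻ ω, hat ω (zcube (0 : Fin d → ℤ)) ^ 2 ∂E.P) ≠ ⊤ ∧
  ∃ C₀ : ℝ, 0 ≤ C₀ ∧ ∃ α : ℝ, (d = 1 → 0 < α) ∧
    ∀ k k' : Fin d → ℤ, k ≠ k' →
      covN E k k' ≤ if 2 ≤ d then C₀ / zdist k k' else C₀ * zdist k k' ^ (-(1 + α))

/-- The state space of the exclusion process. -/
abbrev EtaSp (d : ℕ) := Pt d → Bool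

open Classical in
/-- The configuration `η^{x,y}` obtained from `η` by exchanging the values at `x,y`. -/
def swapEta (x y : Pt d) (η : EtaSp d) : EtaSp d :=
  fun z => if z = x then η y else if z = y then η x else η z

/-- `η_x ∈ {0,1}` as a real number. -/
def indEta {d : ℕ} (η : EtaSp d) (x : Pt d) : ℝ := if η x then 1 else 0

/-- The exclusion generator
`ℒ_ω f(η) = Σ_{x,y∈ω̂} c_{x,y}(ω) η_x(1-η_y)[f(η^{x,y}) - f(η)]`. -/
def exclGen (c : Pt d → Pt d → Cfg d S → ℝ) (ω : Cfg d S)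
    (f : EtaSp d → ℝ) (η : EtaSp d) : ℝ :=
  ∫ x, ∫ y, c x y ω * indEta η x * (1 - indEta η y) * (f (swapEta x y η) - f η) ∂hat ω ∂hat ω

/-- Bounded measurable local (cylinder) functions on the exclusion state space. -/
def IsLocalFn {d : ℕ} (f : EtaSp d → ℝ) : Prop :=
  Measurable f ∧ (∃ M, ∀ η, |f η| ≤ M) ∧
  ∃ F : Finset (Pt d), ∀ η η' : EtaSp d, (∀ x ∈ F, η x = η' x) → f η = f η'

/-- `Q t` is the time-`t` distribution of the exclusion process on `ω̂` with jump rates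
`c_{x,y}(ω)` and initial distribution `init` (characterized by the Kolmogorov
forward equations on local functions). -/
structure IsExclusionEvolution (c : Pt d → Pt d → Cfg d S → ℝ) (ω : Cfg d S)
    (init : Measure (EtaSp d)) (Q : ℝ → Measure (EtaSp d)) : Prop where
  prob : ∀ t : ℝ, 0 ≤ t → IsProbabilityMeasure (Q t)
  init_eq : Q 0 = init
  forward : ∀ f : EtaSp d → ℝ, IsLocalFn f → ∀ t : ℝ, 0 < t →
    HasDerivAt (fun s => ∫ η, f η ∂Q s) (∫ η, exclGen c ω f η ∂Q t) t

/-- The empirical density field `ε^d Σ_{x∈ω̂} φ(εx) η_x`. -/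
def empirical (ω : Cfg d S) (ε : ℝ) (φ : Pt d → ℝ) (η : EtaSp d) : ℝ :=
  ε ^ d * ∫ x, φ (ε • x) * indEta η x ∂hat ω

/-- The spatial support `ω̂` is, under `P`, a Poisson point process on `ℝ^d` with
intensity `m`: Poisson counts and independence over disjoint sets. -/
def IsPoissonPP (E : Setting d S) (m : ℝ) : Prop :=
  (∀ A : Set (Pt d), MeasurableSet A → volume A ≠ ⊤ → ∀ n : ℕ,
      E.P {ω | hat ω A = n} =
        ENNReal.ofReal (Real.exp (-(m * (volume A).toReal)) *
          (m * (volume A).toReal) ^ n / n.factorial)) ∧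
  ∀ (k : ℕ) (A : Fin k → Set (Pt d)), (∀ i, MeasurableSet (A i)) →
    Pairwise (Function.onFun Disjoint A) →
    ProbabilityTheory.iIndepFun (fun i ω => hat ω (A i)) E.P

end RWMPP
namespace RWMPP

section AuxBasics

open Set

variable {d : ℕ} {S : Type*} [MeasurableSpace S]

lemma ptNorm_eq (x : Pt d) : ptNorm x = ‖WithLp.toLp 2 x‖ := by
  rw [EuclideanSpace.norm_eq]
  unfold ptNorm
  congr 1
  refine Finset.sum_congr rfl fun i _ => ?_
  rw [Real.norm_eq_abs, sq_abs]

lemma ptNorm_nonneg (x : Pt d) : 0 ≤ ptNorm x := Real.sqrt_nonneg _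

lemma ptNorm_triangle (a b : Pt d) : ptNorm (a + b) ≤ ptNorm a + ptNorm b := by
  rw [ptNorm_eq, ptNorm_eq, ptNorm_eq]
  exact norm_add_le (WithLp.toLp 2 a) (WithLp.toLp 2 b)

lemma measurable_ptNorm : Measurable (ptNorm : Pt d → ℝ) := by
  apply Measurable.comp Real.continuous_sqrt.measurable
  exact Finset.measurable_sum _ fun i _ => (measurable_pi_apply i).pow_const 2

/-- The closed ball `{ptNorm ≤ r}`. -/
def ballN (d : ℕ) (r : ℝ) : Set (Pt d) := {x | ptNorm x ≤ r}

lemma measurableSet_ballN (r : ℝ) : MeasurableSet (ballN d r) :=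
  measurable_ptNorm measurableSet_Iic

lemma measurableSet_zcube (k : Fin d → ℤ) : MeasurableSet (zcube k) := by
  have : zcube k = ⋂ i, (fun x : Pt d => x i) ⁻¹' (Set.Ico (k i : ℝ) ((k i : ℝ) + 1)) := by
    ext x
    simp [zcube, Set.mem_Ico, Set.mem_iInter]
  rw [this]
  exact MeasurableSet.iInter fun i => (measurable_pi_apply i) measurableSet_Ico

/-- The cube `k + [0,2)^d`. -/
def bigcube (k : Fin d → ℤ) : Set (Pt d) :=
  {x | ∀ i, (k i : ℝ) ≤ x i ∧ x i < (k i : ℝ) + 2}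

lemma measurableSet_bigcube (k : Fin d → ℤ) : MeasurableSet (bigcube k) := by
  have : bigcube k = ⋂ i, (fun x : Pt d => x i) ⁻¹' (Set.Ico (k i : ℝ) ((k i : ℝ) + 2)) := by
    ext x
    simp [bigcube, Set.mem_Ico, Set.mem_iInter]
  rw [this]
  exact MeasurableSet.iInter fun i => (measurable_pi_apply i) measurableSet_Ico

lemma measurableSet_unitCube : MeasurableSet (unitCube d) := by
  have : unitCube d = ⋂ i, (fun x : Pt d => x i) ⁻¹' (Set.Icc (0 : ℝ) 1) := by
    ext x
    simp [unitCube, Set.mem_Icc, Set.mem_iInter]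
  rw [this]
  exact MeasurableSet.iInter fun i => (measurable_pi_apply i) measurableSet_Icc

lemma hat_apply (ω : Cfg d S) {B : Set (Pt d)} (hB : MeasurableSet B) :
    hat ω B = ω (Prod.fst ⁻¹' B) := Measure.map_apply measurable_fst hB

lemma measurable_hat_apply {B : Set (Pt d)} (hB : MeasurableSet B) :
    Measurable fun ω : Cfg d S => hat ω B := by
  have : (fun ω : Cfg d S => hat ω B) = fun ω : Cfg d S => ω (Prod.fst ⁻¹' B) :=
    funext fun ω => hat_apply ω hB
  rw [this]
  exact Measure.measurable_coe (measurable_fst hB)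

lemma measurable_shiftmap (x : Pt d) : Measurable fun p : Pt d × S => (p.1 - x, p.2) :=
  (measurable_fst.sub measurable_const).prodMk measurable_snd

lemma measurable_shift (x : Pt d) : Measurable (shift (S := S) x) :=
  Measure.measurable_map _ (measurable_shiftmap x)

lemma measurable_subconst (x : Pt d) : Measurable fun y : Pt d => y - x :=
  measurable_id.sub measurable_const

lemma hat_shift (x : Pt d) (ω : Cfg d S) :
    hat (shift x ω) = (hat ω).map (fun y => y - x) := by
  unfold hat shift
  rw [Measure.map_map measurable_fst (measurable_shiftmap x),
      Measure.map_map (measurable_subconst x) measurable_fst]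
  rfl

lemma hat_shift_apply (x : Pt d) (ω : Cfg d S) {B : Set (Pt d)} (hB : MeasurableSet B) :
    hat (shift x ω) B = hat ω ((fun y => y - x) ⁻¹' B) := by
  rw [hat_shift, Measure.map_apply (measurable_subconst x) hB]

lemma inSupp_shift_zero {x : Pt d} {ω : Cfg d S} :
    inSupp (shift x ω) 0 ↔ inSupp ω x := by
  unfold inSupp
  rw [hat_shift_apply x ω (measurableSet_singleton 0)]
  have : (fun y : Pt d => y - x) ⁻¹' {0} = {x} := by
    ext y
    simp [sub_eq_zero]
  rw [this]

/-! ### Configurations -/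

lemma IsConfig.exists_supp {ω : Cfg d S} (hω : IsConfig ω) :
    ∃ D : Set (Pt d), D.Countable ∧ hat ω Dᶜ = 0 ∧ ∀ y ∈ D, inSupp ω y := by
  obtain ⟨X, hXc, -, -, hXeq⟩ := hω
  refine ⟨Prod.fst '' X, hXc.image _, ?_, ?_⟩
  · have hDm : MeasurableSet ((Prod.fst '' X : Set (Pt d))ᶜ) :=
      ((hXc.image _).measurableSet).compl
    rw [hat_apply ω hDm, hXeq, Measure.sum_apply _ (measurable_fst hDm)]
    have : ∀ p : X, Measure.dirac (p : Pt d × S) (Prod.fst ⁻¹' (Prod.fst '' X)ᶜ) = 0 := by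
      intro p
      rw [Measure.dirac_apply' _ (measurable_fst hDm)]
      apply Set.indicator_of_notMem
      simp only [Set.mem_preimage, Set.mem_compl_iff, not_not]
      exact ⟨(p : Pt d × S), p.2, rfl⟩
    rw [tsum_congr this, tsum_zero]
  · rintro y ⟨p, hp, rfl⟩
    unfold inSupp
    rw [hat_apply ω (measurableSet_singleton _), hXeq,
      Measure.sum_apply _ (measurable_fst (measurableSet_singleton _))]
    intro h0
    have hterm := ENNReal.tsum_eq_zero.mp h0 ⟨p, hp⟩
    rw [Measure.dirac_apply' _ (measurable_fst (measurableSet_singleton _))] at hterm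
    rw [Set.indicator_of_mem (by simp : (⟨p, hp⟩ : X).1 ∈ Prod.fst ⁻¹' {p.1})] at hterm
    simp at hterm

lemma IsConfig.ae_inSupp {ω : Cfg d S} (hω : IsConfig ω) :
    ∀ᵐ y ∂hat ω, inSupp ω y := by
  obtain ⟨D, hDc, hD0, hDs⟩ := hω.exists_supp
  rw [MeasureTheory.ae_iff]
  refine measure_mono_null (fun y hy => ?_) hD0
  simp only [Set.mem_setOf_eq] at hy
  simp only [Set.mem_compl_iff]
  exact fun hyD => hy (hDs y hyD)

lemma IsConfig.shift_ae_inSupp {ω : Cfg d S} (hω : IsConfig ω) (x : Pt d) :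
    ∀ᵐ y ∂hat (shift x ω), inSupp (shift x ω) y := by
  obtain ⟨D, hDc, hD0, hDs⟩ := hω.exists_supp
  set D' : Set (Pt d) := (fun y => y - x) '' D with hD'
  have hD'm : MeasurableSet D' := (hDc.image _).measurableSet
  rw [MeasureTheory.ae_iff]
  have hsub : {y | ¬ inSupp (shift x ω) y} ⊆ D'ᶜ := by
    intro y hy
    simp only [Set.mem_setOf_eq] at hy
    intro hyD'
    apply hy
    obtain ⟨z, hz, rfl⟩ := hyD'
    unfold inSupp
    rw [hat_shift_apply x ω (measurableSet_singleton _)]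
    have : (fun y : Pt d => y - x) ⁻¹' {z - x} = {z} := by
      ext u
      simp [sub_left_inj]
    rw [this]
    exact hDs z hz
  refine measure_mono_null hsub ?_
  rw [hat_shift_apply x ω hD'm.compl]
  have : (fun y : Pt d => y - x) ⁻¹' D'ᶜ = Dᶜ := by
    ext u
    simp only [Set.mem_preimage, Set.mem_compl_iff, hD']
    constructor
    · intro hc hu; exact hc ⟨u, hu, rfl⟩
    · rintro hc ⟨z, hz, hzz⟩
      have : z = u := by
        have := sub_left_inj.mp hzz
        exact this
      exact hc (this ▸ hz)
  rw [this]
  exact hD0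

lemma IsConfig.hat_ballN_lt_top {ω : Cfg d S} (hω : IsConfig ω) (r : ℝ) :
    hat ω (ballN d r) < ⊤ := by
  obtain ⟨X, hXc, -, hXfin, hXeq⟩ := hω
  have hCm : MeasurableSet (Prod.fst ⁻¹' (ballN d r) : Set (Pt d × S)) :=
    measurable_fst (measurableSet_ballN r)
  rw [hat_apply ω (measurableSet_ballN r), hXeq, Measure.sum_apply _ hCm]
  have hfin : (Subtype.val ⁻¹' (Prod.fst ⁻¹' (ballN d r)) : Set X).Finite := by
    refine Set.Finite.subset ((hXfin r).preimage Subtype.val_injective.injOn) ?_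
    intro p hp
    exact ⟨p.2, hp⟩
  have hval : ∀ p : X, Measure.dirac (p : Pt d × S) (Prod.fst ⁻¹' (ballN d r)) =
      Set.indicator (Prod.fst ⁻¹' (ballN d r)) 1 (p : Pt d × S) := fun p =>
    Measure.dirac_apply' _ hCm
  rw [tsum_congr hval]
  rw [tsum_eq_sum (s := hfin.toFinset) (fun p hp => by
    apply Set.indicator_of_notMem
    simpa using hp)]
  calc ∑ p ∈ hfin.toFinset, Set.indicator (Prod.fst ⁻¹' (ballN d r)) 1 (p : Pt d × S)
      ≤ ∑ _p ∈ hfin.toFinset, 1 := by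
        refine Finset.sum_le_sum fun p _ => ?_
        by_cases hp : (p : Pt d × S) ∈ Prod.fst ⁻¹' (ballN d r) <;>
          simp [Set.indicator_apply, hp]
    _ = (hfin.toFinset.card : ℝ≥0∞) := by simp
    _ < ⊤ := ENNReal.natCast_lt_top _

end AuxBasics


section AuxL

open Set ProbabilityTheory

variable {d : ℕ} {S : Type*} [MeasurableSpace S] [TopologicalSpace S] [PolishSpace S] [BorelSpace S]

/-- The integrand `(y,z) ↦ c_{0,y}(ω) c_{y,z}(ω)` in `ℝ≥0∞`. -/
def Fk (E : Setting d S) (ω : Cfg d S) (y z : Pt d) : ℝ≥0∞ :=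
  ENNReal.ofReal (E.c 0 y ω * E.c y z ω)

/-- The double lintegral version of `F_*`. -/
def LL (E : Setting d S) (ω : Cfg d S) : ℝ≥0∞ :=
  ∫⁻ y, ∫⁻ z, Fk E ω y z ∂hat ω ∂hat ω

lemma measurable_Fk (E : Setting d S) :
    Measurable fun q : (Cfg d S × Pt d) × Pt d => Fk E q.1.1 q.1.2 q.2 := by
  apply ENNReal.measurable_ofReal.comp
  apply Measurable.mul
  · exact E.c_meas.comp
      ((measurable_const (a := (0 : Pt d))).prodMk
        (measurable_fst.snd.prodMk measurable_fst.fst))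
  · exact E.c_meas.comp
      (measurable_fst.snd.prodMk (measurable_snd.prodMk measurable_fst.fst))

lemma measurable_Fk2 (E : Setting d S) (ω : Cfg d S) :
    Measurable fun q : Pt d × Pt d => Fk E ω q.1 q.2 :=
  (measurable_Fk E).comp
    ((measurable_const.prodMk measurable_fst).prodMk measurable_snd)

lemma measurable_Fk_z (E : Setting d S) (ω : Cfg d S) (y : Pt d) :
    Measurable fun z : Pt d => Fk E ω y z :=
  (measurable_Fk2 E ω).comp (measurable_const.prodMk measurable_id)

/-- Truncated kernel: `hat ω` restricted to a ball, cut off at total mass `m`. -/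
noncomputable def kap (d : ℕ) (S : Type*) [MeasurableSpace S] (n m : ℕ) :
    Kernel (Cfg d S) (Pt d) :=
  ⟨fun ω => if hat ω (ballN d n) ≤ m then (hat ω).restrict (ballN d n) else 0, by
    apply Measure.measurable_of_measurable_coe
    intro s hs
    have : (fun ω : Cfg d S =>
        (if hat ω (ballN d n) ≤ m then (hat ω).restrict (ballN d n) else 0) s)
        = fun ω : Cfg d S => if hat ω (ballN d n) ≤ m then hat ω (s ∩ ballN d n) else 0 := by
      funext ω
      split <;> simp [Measure.restrict_apply hs]
    rw [this]
    exact Measurable.ite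
      (measurableSet_le (measurable_hat_apply (measurableSet_ballN _)) measurable_const)
      (measurable_hat_apply (hs.inter (measurableSet_ballN _))) measurable_const⟩

instance isFiniteKernel_kap (n m : ℕ) : IsFiniteKernel (kap d S n m) := by
  refine ⟨⟨m, ENNReal.natCast_lt_top m, fun ω => ?_⟩⟩
  show (if hat ω (ballN d n) ≤ m then (hat ω).restrict (ballN d n) else 0) Set.univ ≤ m
  split_ifs with hcond
  · rw [Measure.restrict_apply_univ]; exact hcond
  · simp

lemma kap_apply (n m : ℕ) (ω : Cfg d S) :
    kap d S n m ω = if hat ω (ballN d n) ≤ m then (hat ω).restrict (ballN d n) else 0 := rfl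

lemma kap_le (n m : ℕ) (ω : Cfg d S) : kap d S n m ω ≤ hat ω := by
  rw [kap_apply]
  split
  · exact Measure.restrict_le_self
  · exact Measure.zero_le _

/-- Truncated double integral. -/
noncomputable def Lam (E : Setting d S) (n m : ℕ) (ω : Cfg d S) : ℝ≥0∞ :=
  ∫⁻ y, ∫⁻ z, Fk E ω y z ∂(kap d S n m ω) ∂(kap d S n m ω)

/-- Measurable version of `LL` (they agree on locally finite configurations). -/
noncomputable def Lfun (E : Setting d S) (ω : Cfg d S) : ℝ≥0∞ :=
  ⨆ n, ⨆ m, Lam E n m ω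

lemma measurable_inner_kap (E : Setting d S) (n m : ℕ) :
    Measurable fun p : Cfg d S × Pt d => ∫⁻ z, Fk E p.1 p.2 z ∂(kap d S n m p.1) := by
  have h1 : Measurable fun p : Cfg d S × Pt d =>
      ∫⁻ z, Fk E p.1 p.2 z ∂(((kap d S n m).comap Prod.fst measurable_fst) p) :=
    Measurable.lintegral_kernel_prod_right
      (κ := (kap d S n m).comap Prod.fst measurable_fst)
      (f := fun p z => Fk E p.1 p.2 z) (measurable_Fk E)
  simpa [Kernel.comap_apply] using h1
lemma measurable_Lam (E : Setting d S) (n m : ℕ) : Measurable (Lam E n m) :=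
  Measurable.lintegral_kernel_prod_right (κ := kap d S n m)
    (f := fun ω y => ∫⁻ z, Fk E ω y z ∂(kap d S n m ω)) (measurable_inner_kap E n m)

lemma measurable_Lfun (E : Setting d S) : Measurable (Lfun E) :=
  Measurable.iSup fun n => Measurable.iSup fun m => measurable_Lam E n m

lemma Lam_le_LL (E : Setting d S) (n m : ℕ) (ω : Cfg d S) : Lam E n m ω ≤ LL E ω := by
  calc Lam E n m ω
      ≤ ∫⁻ y, ∫⁻ z, Fk E ω y z ∂hat ω ∂(kap d S n m ω) :=
        lintegral_mono fun y => lintegral_mono' (kap_le n m ω) le_rfl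
    _ ≤ LL E ω := lintegral_mono' (kap_le n m ω) le_rfl

lemma Lfun_le_LL (E : Setting d S) (ω : Cfg d S) : Lfun E ω ≤ LL E ω :=
  iSup_le fun n => iSup_le fun m => Lam_le_LL E n m ω

lemma ballN_mono {n k : ℝ} (hnk : n ≤ k) : ballN d n ⊆ ballN d k :=
  fun _ hx => le_trans hx hnk

lemma exists_mem_ballN (y : Pt d) : ∃ n : ℕ, y ∈ ballN d n := by
  obtain ⟨n, hn⟩ := exists_nat_ge (ptNorm y)
  exact ⟨n, hn⟩

lemma iUnion_ballN : (⋃ n : ℕ, ballN d n) = Set.univ := by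
  ext y
  simpa using exists_mem_ballN y

lemma LL_le_Lfun (E : Setting d S) {ω : Cfg d S}
    (hloc : ∀ n : ℕ, hat ω (ballN d n) < ⊤) : LL E ω ≤ Lfun E ω := by
  classical
  choose m hm using fun n => ENNReal.exists_nat_gt (hloc n).ne
  have hkap : ∀ n : ℕ, kap d S n (m n) ω = (hat ω).restrict (ballN d n) := fun n =>
    if_pos (hm n).le
  set g : ℕ → Pt d → ℝ≥0∞ := fun n y => ∫⁻ z, Fk E ω y z ∂((hat ω).restrict (ballN d n))
    with hg
  have hgmeas : ∀ n, Measurable (g n) := by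
    intro n
    have h0 := (measurable_inner_kap E n (m n)).comp
      (measurable_prodMk_left : Measurable fun y : Pt d => (ω, y))
    have heq : (fun y : Pt d => ∫⁻ z, Fk E ω y z ∂(kap d S n (m n) ω)) = g n := by
      funext y
      rw [hg, hkap n]
    rw [← heq]
    exact h0
  have hgmono : ∀ {n k : ℕ}, n ≤ k → ∀ y, g n y ≤ g k y := fun hnk y =>
    lintegral_mono' (Measure.restrict_mono (ballN_mono (by exact_mod_cast hnk)) le_rfl) le_rfl
  -- pointwise sup over restricted inner integrals
  have hsup_inner : ∀ (f : Pt d → ℝ≥0∞), Measurable f →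
      (⨆ n : ℕ, ∫⁻ y, f y ∂((hat ω).restrict (ballN d n))) = ∫⁻ y, f y ∂hat ω := by
    intro f hf
    have hind : ∀ n : ℕ, (∫⁻ y, f y ∂((hat ω).restrict (ballN d n)))
        = ∫⁻ y, (ballN d n).indicator f y ∂hat ω := fun n =>
      (lintegral_indicator (measurableSet_ballN _) f).symm
    calc (⨆ n : ℕ, ∫⁻ y, f y ∂((hat ω).restrict (ballN d n)))
        = ⨆ n : ℕ, ∫⁻ y, (ballN d n).indicator f y ∂hat ω := by
          exact iSup_congr hind
      _ = ∫⁻ y, ⨆ n : ℕ, (ballN d n).indicator f y ∂hat ω := by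
          rw [lintegral_iSup (fun n => hf.indicator (measurableSet_ballN _))
            (fun n k hnk => Set.indicator_le_indicator_of_subset
              (ballN_mono (by exact_mod_cast hnk)) (fun _ => zero_le))]
      _ = ∫⁻ y, f y ∂hat ω := by
          refine lintegral_congr fun y => ?_
          apply le_antisymm (iSup_le fun n => Set.indicator_le_self _ _ y)
          obtain ⟨n, hn⟩ := exists_mem_ballN y
          calc f y = (ballN d n).indicator f y := (Set.indicator_of_mem hn f).symm
            _ ≤ _ := le_iSup (fun k : ℕ => (ballN d (k : ℝ)).indicator f y) n
  -- first: inner integral as sup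
  have hA : ∀ y, (⨆ n, g n y) = ∫⁻ z, Fk E ω y z ∂hat ω := fun y =>
    hsup_inner _ (measurable_Fk_z E ω y)
  have hB : LL E ω = ⨆ n, ∫⁻ y, g n y ∂hat ω := by
    unfold LL
    rw [lintegral_congr fun y => (hA y).symm]
    rw [lintegral_iSup hgmeas (fun n k hnk y => hgmono hnk y)]
  rw [hB]
  refine iSup_le fun n => ?_
  rw [← hsup_inner (g n) (hgmeas n)]
  refine iSup_le fun k => ?_
  set N := max n k with hN
  have h1 : (∫⁻ y, g n y ∂((hat ω).restrict (ballN d k)))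
      ≤ ∫⁻ y, g N y ∂((hat ω).restrict (ballN d N)) := by
    refine le_trans (lintegral_mono fun y => hgmono (le_max_left n k) y) ?_
    exact lintegral_mono' (Measure.restrict_mono
      (ballN_mono (by exact_mod_cast le_max_right n k)) le_rfl) le_rfl
  refine le_trans h1 ?_
  have h2 : (∫⁻ y, g N y ∂((hat ω).restrict (ballN d N))) = Lam E N (m N) ω := by
    unfold Lam
    rw [hkap N]
  rw [h2]
  exact le_trans (le_iSup (fun mm => Lam E N mm ω) (m N))
    (le_iSup (fun n => ⨆ mm, Lam E n mm ω) N)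

lemma sfinite_of_locfin {ω : Cfg d S} (hloc : ∀ n : ℕ, hat ω (ballN d n) < ⊤) :
    SFinite (hat ω) := by
  constructor
  refine ⟨fun n => (hat ω).restrict (disjointed (fun k : ℕ => ballN d k) n),
    fun n => ?_, ?_⟩
  · constructor
    rw [Measure.restrict_apply_univ]
    exact lt_of_le_of_lt (measure_mono (disjointed_subset _ n)) (hloc n)
  · rw [← Measure.restrict_iUnion (disjoint_disjointed _)
      (MeasurableSet.disjointed fun k => measurableSet_ballN _)]
    rw [iUnion_disjointed, iUnion_ballN, Measure.restrict_univ]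

lemma Fstar_eq (E : Setting d S) {ω : Cfg d S}
    (hloc : ∀ n : ℕ, hat ω (ballN d n) < ⊤) (hfin : LL E ω ≠ ⊤) :
    E.Fstar ω = (LL E ω).toReal := by
  have hsf : SFinite (hat ω) := sfinite_of_locfin hloc
  have hcz : ∀ y : Pt d, Measurable fun z => E.c 0 y ω * E.c y z ω := by
    intro y
    apply Measurable.mul measurable_const
    exact E.c_meas.comp
      ((measurable_const (a := y)).prodMk (measurable_id.prodMk measurable_const))
  have hinner : ∀ y, (∫ z, E.c 0 y ω * E.c y z ω ∂hat ω)
      = (∫⁻ z, Fk E ω y z ∂hat ω).toReal := fun y =>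
    integral_eq_lintegral_of_nonneg_ae
      (Filter.Eventually.of_forall fun z => mul_nonneg (E.c_nonneg _ _ _) (E.c_nonneg _ _ _))
      (hcz y).aestronglyMeasurable
  have hLmeas : Measurable fun y => ∫⁻ z, Fk E ω y z ∂hat ω :=
    (measurable_Fk2 E ω).lintegral_prod_right'
  have h1 : E.Fstar ω = ∫ y, (∫⁻ z, Fk E ω y z ∂hat ω).toReal ∂hat ω :=
    integral_congr_ae (Filter.Eventually.of_forall hinner)
  rw [h1, integral_eq_lintegral_of_nonneg_ae
    (Filter.Eventually.of_forall fun y => ENNReal.toReal_nonneg)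
    hLmeas.ennreal_toReal.aestronglyMeasurable]
  congr 1
  have hae := ae_lt_top hLmeas hfin
  refine lintegral_congr_ae (hae.mono fun y hy => ?_)
  exact ENNReal.ofReal_toReal hy.ne

end AuxL


section AuxPalm

open Set

variable {d : ℕ} {S : Type*} [MeasurableSpace S] [TopologicalSpace S] [PolishSpace S] [BorelSpace S]

/-- Superadditive Campbell-type inequality derived from the Palm identity. -/
lemma palm_mul_le (E : Setting d S) {f : Cfg d S → ℝ≥0∞} (hf : Measurable f) :
    (∫⁻ ω, hat ω (unitCube d) ∂E.P) * ∫⁻ ω, f ω ∂E.P0 ≤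
      ∫⁻ ω, ∫⁻ x in unitCube d, f (shift x ω) ∂hat ω ∂E.P := by
  set I : ℝ≥0∞ := ∫⁻ ω, hat ω (unitCube d) ∂E.P with hI
  have hsimple : ∀ φ : SimpleFunc (Cfg d S) ℝ≥0∞,
      I * ∫⁻ ω, φ ω ∂E.P0 ≤ ∫⁻ ω, ∫⁻ x in unitCube d, φ (shift x ω) ∂hat ω ∂E.P := by
    intro φ
    induction φ using SimpleFunc.induction with
    | @const c s hs =>
      have hcoe : ∀ ω' : Cfg d S,
          (SimpleFunc.piecewise s hs (SimpleFunc.const _ c) (SimpleFunc.const _ 0)) ω'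
            = s.indicator (fun _ => c) ω' := by
        intro ω'
        simp only [SimpleFunc.coe_piecewise, SimpleFunc.coe_const, SimpleFunc.coe_zero,
          Set.piecewise_eq_indicator]
        rfl
      calc I * ∫⁻ ω, _ ∂E.P0
          = I * (c * E.P0 s) := by
            rw [lintegral_congr hcoe, lintegral_indicator_const hs]
        _ = c * (I * E.P0 s) := by ring
        _ = c * ∫⁻ ω, ∫⁻ x in unitCube d,
              s.indicator (fun _ => (1 : ℝ≥0∞)) (shift x ω) ∂hat ω ∂E.P := by
            rw [E.palm s hs]
        _ ≤ ∫⁻ ω, c * ∫⁻ x in unitCube d,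
              s.indicator (fun _ => (1 : ℝ≥0∞)) (shift x ω) ∂hat ω ∂E.P :=
            lintegral_const_mul_le _ _
        _ ≤ ∫⁻ ω, ∫⁻ x in unitCube d,
              c * s.indicator (fun _ => (1 : ℝ≥0∞)) (shift x ω) ∂hat ω ∂E.P :=
            lintegral_mono fun ω => lintegral_const_mul_le _ _
        _ = _ := by
            refine lintegral_congr fun ω => lintegral_congr fun x => ?_
            rw [hcoe]
            by_cases hx : shift x ω ∈ s <;> simp [hx]
    | @add φ ψ hdisj hφ hψ =>
      calc I * ∫⁻ ω, (φ + ψ) ω ∂E.P0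
          = I * (∫⁻ ω, φ ω ∂E.P0 + ∫⁻ ω, ψ ω ∂E.P0) := by
            congr 1
            simp only [SimpleFunc.coe_add, Pi.add_apply]
            exact lintegral_add_left φ.measurable _
        _ = I * ∫⁻ ω, φ ω ∂E.P0 + I * ∫⁻ ω, ψ ω ∂E.P0 := mul_add _ _ _
        _ ≤ (∫⁻ ω, ∫⁻ x in unitCube d, φ (shift x ω) ∂hat ω ∂E.P)
            + ∫⁻ ω, ∫⁻ x in unitCube d, ψ (shift x ω) ∂hat ω ∂E.P := add_le_add hφ hψ
        _ ≤ ∫⁻ ω, ((∫⁻ x in unitCube d, φ (shift x ω) ∂hat ω)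
            + ∫⁻ x in unitCube d, ψ (shift x ω) ∂hat ω) ∂E.P := le_lintegral_add _ _
        _ ≤ ∫⁻ ω, ∫⁻ x in unitCube d, (φ (shift x ω) + ψ (shift x ω)) ∂hat ω ∂E.P :=
            lintegral_mono fun ω => le_lintegral_add _ _
        _ = _ := by
            refine lintegral_congr fun ω => lintegral_congr fun x => ?_
            simp
  rw [lintegral_eq_iSup_eapprox_lintegral hf, ENNReal.mul_iSup]
  refine iSup_le fun n => ?_
  calc I * (SimpleFunc.eapprox f n).lintegral E.P0
      = I * ∫⁻ ω, (SimpleFunc.eapprox f n) ω ∂E.P0 := by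
        rw [SimpleFunc.lintegral_eq_lintegral]
    _ ≤ ∫⁻ ω, ∫⁻ x in unitCube d, (SimpleFunc.eapprox f n) (shift x ω) ∂hat ω ∂E.P :=
        hsimple _
    _ ≤ _ := by
        refine lintegral_mono fun ω => lintegral_mono fun x => ?_
        calc (SimpleFunc.eapprox f n) (shift x ω)
            ≤ ⨆ k, (SimpleFunc.eapprox f k) (shift x ω) :=
              le_iSup (fun k => (SimpleFunc.eapprox f k) (shift x ω)) n
          _ = f (shift x ω) := SimpleFunc.iSup_eapprox_apply hf _

end AuxPalm

section AuxKey

open Set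

variable {d : ℕ} {S : Type*} [MeasurableSpace S] [TopologicalSpace S] [PolishSpace S] [BorelSpace S]

lemma zdist_self_sub (v u : Fin d → ℤ) : zdist v (v - u) = zdist u 0 := by
  unfold zdist
  congr 1
  refine Finset.sum_congr rfl fun i _ => ?_
  simp

lemma zdist_zero_comm (v : Fin d → ℤ) : zdist 0 v = zdist v 0 := by
  unfold zdist
  congr 1
  refine Finset.sum_congr rfl fun i _ => ?_
  push_cast
  ring

set_option maxHeartbeats 1000000 in
/-- Key pointwise bound: the double integral `LL` over a configuration with `0` in its
support is bounded by lattice sums. -/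
lemma key_bound (E : Setting d S) (h : ℝ → ℝ) (hh : ∀ r, 0 ≤ h r)
    (hbound : ∀ (ω : Cfg d S) (u v : Fin d → ℤ) (x y : Pt d),
      inSupp ω x → inSupp ω y →
      (∀ i, (u i : ℝ) ≤ x i ∧ x i ≤ (u i : ℝ) + 1) →
      (∀ i, (v i : ℝ) ≤ y i ∧ y i ≤ (v i : ℝ) + 1) →
      E.c x y ω ≤ h (zdist u v))
    {ω' : Cfg d S} (h0 : inSupp ω' 0) (hae : ∀ᵐ y ∂hat ω', inSupp ω' y) :
    LL E ω' ≤ ∑' vw : (Fin d → ℤ) × (Fin d → ℤ),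
      (ENNReal.ofReal (h (zdist 0 vw.1)) * ENNReal.ofReal (h (zdist vw.1 vw.2)))
        * (hat ω' (zcube vw.1) * hat ω' (zcube vw.2)) := by
  classical
  set coef : (Fin d → ℤ) × (Fin d → ℤ) → ℝ≥0∞ := fun vw =>
    ENNReal.ofReal (h (zdist 0 vw.1)) * ENNReal.ofReal (h (zdist vw.1 vw.2)) with hcoef
  have hpt : ∀ y, inSupp ω' y → ∀ z, inSupp ω' z → Fk E ω' y z
      ≤ ∑' vw : (Fin d → ℤ) × (Fin d → ℤ),
        coef vw * ((zcube vw.1).indicator 1 y * (zcube vw.2).indicator 1 z) := by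
    intro y hy z hz
    set v : Fin d → ℤ := fun i => ⌊y i⌋ with hv
    set w : Fin d → ℤ := fun i => ⌊z i⌋ with hw
    have hyv : y ∈ zcube v := fun i => ⟨Int.floor_le _, Int.lt_floor_add_one _⟩
    have hzw : z ∈ zcube w := fun i => ⟨Int.floor_le _, Int.lt_floor_add_one _⟩
    have hc1 : E.c 0 y ω' ≤ h (zdist 0 v) :=
      hbound ω' 0 v 0 y h0 hy (fun i => by norm_num)
        (fun i => ⟨(hyv i).1, (hyv i).2.le⟩)
    have hc2 : E.c y z ω' ≤ h (zdist v w) :=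
      hbound ω' v w y z hy hz (fun i => ⟨(hyv i).1, (hyv i).2.le⟩)
        (fun i => ⟨(hzw i).1, (hzw i).2.le⟩)
    calc Fk E ω' y z ≤ ENNReal.ofReal (h (zdist 0 v) * h (zdist v w)) :=
          ENNReal.ofReal_le_ofReal
            (mul_le_mul hc1 hc2 (E.c_nonneg _ _ _) (hh _))
      _ = coef (v, w) * ((zcube v).indicator 1 y * (zcube w).indicator 1 z) := by
          rw [ENNReal.ofReal_mul (hh _)]
          rw [Set.indicator_of_mem hyv, Set.indicator_of_mem hzw]
          simp [hcoef]
      _ ≤ _ := ENNReal.le_tsum (v, w)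
  have hindm : ∀ k : Fin d → ℤ, Measurable ((zcube k).indicator (1 : Pt d → ℝ≥0∞)) :=
    fun k => measurable_one.indicator (measurableSet_zcube k)
  have hinner_g : ∀ y, (∫⁻ z, ∑' vw : (Fin d → ℤ) × (Fin d → ℤ),
        coef vw * ((zcube vw.1).indicator 1 y * (zcube vw.2).indicator 1 z) ∂hat ω')
      = ∑' vw : (Fin d → ℤ) × (Fin d → ℤ),
        coef vw * ((zcube vw.1).indicator 1 y * hat ω' (zcube vw.2)) := by
    intro y
    rw [lintegral_tsum (μ := hat ω') (f := fun vw (z : Pt d) =>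
      coef vw * ((zcube vw.1).indicator 1 y * (zcube vw.2).indicator 1 z))
      (fun vw => ((((hindm vw.2).const_mul _).const_mul _)).aemeasurable)]
    refine tsum_congr fun vw => ?_
    calc ∫⁻ z, coef vw * ((zcube vw.1).indicator 1 y * (zcube vw.2).indicator 1 z) ∂hat ω'
        = ∫⁻ z, (coef vw * (zcube vw.1).indicator 1 y) * (zcube vw.2).indicator 1 z ∂hat ω' := by
          refine lintegral_congr fun z => (mul_assoc _ _ _).symm
      _ = (coef vw * (zcube vw.1).indicator 1 y)
            * ∫⁻ z, (zcube vw.2).indicator 1 z ∂hat ω' :=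
          lintegral_const_mul _ (hindm vw.2)
      _ = coef vw * ((zcube vw.1).indicator 1 y * hat ω' (zcube vw.2)) := by
          rw [show ((zcube vw.2).indicator (1 : Pt d → ℝ≥0∞))
              = (zcube vw.2).indicator (fun _ => (1:ℝ≥0∞)) from rfl,
            lintegral_indicator_const (measurableSet_zcube vw.2), one_mul, mul_assoc]
  calc LL E ω' ≤ ∫⁻ y, ∫⁻ z, ∑' vw : (Fin d → ℤ) × (Fin d → ℤ),
        coef vw * ((zcube vw.1).indicator 1 y * (zcube vw.2).indicator 1 z) ∂hat ω' ∂hat ω' := by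
        refine lintegral_mono_ae (hae.mono fun y hy => ?_)
        exact lintegral_mono_ae (hae.mono fun z hz => hpt y hy z hz)
    _ = ∑' vw : (Fin d → ℤ) × (Fin d → ℤ),
        coef vw * (hat ω' (zcube vw.1) * hat ω' (zcube vw.2)) := by
        rw [lintegral_congr hinner_g]
        rw [lintegral_tsum (μ := hat ω') (f := fun vw (y : Pt d) =>
          coef vw * ((zcube vw.1).indicator 1 y * hat ω' (zcube vw.2)))
          (fun vw => (((hindm vw.1).mul_const _).const_mul _).aemeasurable)]
        refine tsum_congr fun vw => ?_
        calc ∫⁻ y, coef vw * ((zcube vw.1).indicator 1 y * hat ω' (zcube vw.2)) ∂hat ω'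
            = ∫⁻ y, (coef vw * hat ω' (zcube vw.2)) * (zcube vw.1).indicator 1 y ∂hat ω' := by
              refine lintegral_congr fun y => by ring
          _ = (coef vw * hat ω' (zcube vw.2)) * ∫⁻ y, (zcube vw.1).indicator 1 y ∂hat ω' :=
              lintegral_const_mul _ (hindm vw.1)
          _ = coef vw * (hat ω' (zcube vw.1) * hat ω' (zcube vw.2)) := by
              rw [show ((zcube vw.1).indicator (1 : Pt d → ℝ≥0∞))
                  = (zcube vw.1).indicator (fun _ => (1:ℝ≥0∞)) from rfl,
                lintegral_indicator_const (measurableSet_zcube vw.1), one_mul]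
              ring
  
end AuxKey


section AuxMoments

open Set

variable {d : ℕ} {S : Type*} [MeasurableSpace S] [TopologicalSpace S] [PolishSpace S] [BorelSpace S]

lemma lint_zcube_pow_shift (E : Setting d S) (k : Fin d → ℤ) :
    ∫⁻ ω, hat ω (zcube k) ^ 3 ∂E.P = ∫⁻ ω, hat ω (zcube (0 : Fin d → ℤ)) ^ 3 ∂E.P := by
  set x : Pt d := fun i => (k i : ℝ) with hx
  have hmeas : Measurable fun ω : Cfg d S => hat ω (zcube (0 : Fin d → ℤ)) ^ 3 :=
    (measurable_hat_apply (measurableSet_zcube 0)).pow_const 3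
  have h1 : ∫⁻ ω, hat ω (zcube (0 : Fin d → ℤ)) ^ 3 ∂E.P
      = ∫⁻ ω, hat (shift x ω) (zcube (0 : Fin d → ℤ)) ^ 3 ∂E.P := by
    conv_lhs => rw [← E.stationary x]
    rw [lintegral_map hmeas (measurable_shift x)]
  have h2 : ∀ ω : Cfg d S, hat (shift x ω) (zcube (0 : Fin d → ℤ)) = hat ω (zcube k) := by
    intro ω
    rw [hat_shift_apply x ω (measurableSet_zcube 0)]
    congr 1
    ext y
    show (∀ i, ((0 : Fin d → ℤ) i : ℝ) ≤ (y - x) i ∧ (y - x) i < ((0 : Fin d → ℤ) i : ℝ) + 1)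
      ↔ ∀ i, (k i : ℝ) ≤ y i ∧ y i < (k i : ℝ) + 1
    refine forall_congr' fun i => ?_
    rw [Pi.sub_apply, Pi.zero_apply, Int.cast_zero, hx]
    constructor <;> intro h' <;> exact ⟨by linarith [h'.1], by linarith [h'.2]⟩
  rw [h1]
  exact lintegral_congr fun ω => by rw [h2 ω]

lemma mul3_le (a b c : ℝ≥0∞) : a * b * c ≤ a ^ 3 + b ^ 3 + c ^ 3 := by
  set M := max a (max b c) with hM
  have ha : a ≤ M := le_max_left _ _
  have hb : b ≤ M := le_trans (le_max_left _ _) (le_max_right _ _)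
  have hc : c ≤ M := le_trans (le_max_right _ _) (le_max_right _ _)
  have h1 : a * b * c ≤ M ^ 3 := by
    calc a * b * c ≤ M * M * M := mul_le_mul' (mul_le_mul' ha hb) hc
      _ = M ^ 3 := by ring
  refine h1.trans ?_
  rcases max_cases a (max b c) with ⟨h, -⟩ | ⟨h, -⟩
  · rw [hM, h]
    exact le_add_right le_self_add
  · rcases max_cases b c with ⟨h2, -⟩ | ⟨h2, -⟩
    · rw [hM, h, h2]
      exact le_add_right le_add_self
    · rw [hM, h, h2]
      exact le_add_self

lemma zcube_zero_subset_unitCube : zcube (0 : Fin d → ℤ) ⊆ unitCube d := by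
  intro y hy i
  have h1 := (hy i).1
  have h2 := (hy i).2
  rw [Pi.zero_apply, Int.cast_zero] at h1 h2
  exact ⟨h1, by linarith⟩

lemma triple_moment_le (E : Setting d S) (a b c : Fin d → ℤ) :
    ∫⁻ ω, hat ω (zcube a) * hat ω (zcube b) * hat ω (zcube c) ∂E.P
      ≤ 3 * ∫⁻ ω, hat ω (unitCube d) ^ 3 ∂E.P := by
  have hm : ∀ k : Fin d → ℤ, Measurable fun ω : Cfg d S => hat ω (zcube k) ^ 3 := fun k =>
    (measurable_hat_apply (measurableSet_zcube k)).pow_const 3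
  have hz : ∀ k : Fin d → ℤ, ∫⁻ ω, hat ω (zcube k) ^ 3 ∂E.P
      ≤ ∫⁻ ω, hat ω (unitCube d) ^ 3 ∂E.P := by
    intro k
    rw [lint_zcube_pow_shift E k]
    refine lintegral_mono fun ω => ?_
    exact pow_le_pow_left' (measure_mono zcube_zero_subset_unitCube) 3
  calc ∫⁻ ω, hat ω (zcube a) * hat ω (zcube b) * hat ω (zcube c) ∂E.P
      ≤ ∫⁻ ω, hat ω (zcube a) ^ 3 + hat ω (zcube b) ^ 3 + hat ω (zcube c) ^ 3 ∂E.P :=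
        lintegral_mono fun ω => mul3_le _ _ _
    _ = (∫⁻ ω, hat ω (zcube a) ^ 3 ∂E.P) + (∫⁻ ω, hat ω (zcube b) ^ 3 ∂E.P)
        + ∫⁻ ω, hat ω (zcube c) ^ 3 ∂E.P := by
        rw [lintegral_add_left (f := fun ω => hat ω (zcube a) ^ 3 + hat ω (zcube b) ^ 3) ((hm a).add (hm b)),
          lintegral_add_left (hm a)]
    _ ≤ (∫⁻ ω, hat ω (unitCube d) ^ 3 ∂E.P) + (∫⁻ ω, hat ω (unitCube d) ^ 3 ∂E.P)
        + ∫⁻ ω, hat ω (unitCube d) ^ 3 ∂E.P := add_le_add (add_le_add (hz a) (hz b)) (hz c)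
    _ = 3 * ∫⁻ ω, hat ω (unitCube d) ^ 3 ∂E.P := by ring

lemma bigcube_subset (v : Fin d → ℤ) :
    bigcube v ⊆ ⋃ e : Fin d → Bool, zcube (v + fun i => if e i then 1 else 0) := by
  classical
  intro y hy
  refine Set.mem_iUnion.mpr ⟨fun i => decide ((v i : ℝ) + 1 ≤ y i), fun i => ?_⟩
  obtain ⟨h1, h2⟩ := hy i
  rw [Pi.add_apply]
  simp only [decide_eq_true_eq]
  rcases le_or_gt ((v i : ℝ) + 1) (y i) with hc | hc
  · rw [if_pos hc]
    push_cast
    exact ⟨by linarith, by linarith⟩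
  · rw [if_neg (not_le.mpr hc)]
    push_cast
    exact ⟨by linarith, by linarith⟩

lemma unitCube_subset :
    unitCube d ⊆ ⋃ e : Fin d → Bool, zcube (fun i => if e i then 1 else 0) := by
  classical
  intro y hy
  refine Set.mem_iUnion.mpr ⟨fun i => decide ((1 : ℝ) ≤ y i), fun i => ?_⟩
  obtain ⟨h1, h2⟩ := hy i
  simp only [decide_eq_true_eq]
  rcases le_or_gt (1 : ℝ) (y i) with hc | hc
  · rw [if_pos hc]
    push_cast
    exact ⟨by linarith, by linarith⟩
  · rw [if_neg (not_le.mpr hc)]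
    push_cast
    exact ⟨by linarith, by linarith⟩

lemma Nbig_le (ω : Cfg d S) (v : Fin d → ℤ) :
    hat ω (bigcube v)
      ≤ ∑' e : Fin d → Bool, hat ω (zcube (v + fun i => if e i then 1 else 0)) :=
  le_trans (measure_mono (bigcube_subset v)) (measure_iUnion_le _)

lemma Ncube_le (ω : Cfg d S) :
    hat ω (unitCube d)
      ≤ ∑' e : Fin d → Bool, hat ω (zcube (fun i => if e i then 1 else 0)) :=
  le_trans (measure_mono unitCube_subset) (measure_iUnion_le _)

lemma tsum_triple_prod (A B C : (Fin d → Bool) → ℝ≥0∞) :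
    (∑' e, A e) * (∑' f, B f) * (∑' g, C g)
      = ∑' efg : (Fin d → Bool) × (Fin d → Bool) × (Fin d → Bool),
          A efg.1 * B efg.2.1 * C efg.2.2 := by
  have hBC : (∑' fg : (Fin d → Bool) × (Fin d → Bool), B fg.1 * C fg.2)
      = (∑' f, B f) * (∑' g, C g) := by
    rw [ENNReal.tsum_prod (f := fun f g => B f * C g)]
    calc (∑' f, ∑' g, B f * C g) = ∑' f, B f * ∑' g, C g :=
        tsum_congr fun f => ENNReal.tsum_mul_left
      _ = _ := ENNReal.tsum_mul_right
  calc (∑' e, A e) * (∑' f, B f) * (∑' g, C g)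
      = (∑' e, A e) * ∑' fg : (Fin d → Bool) × (Fin d → Bool), B fg.1 * C fg.2 := by
        rw [hBC, mul_assoc]
    _ = ∑' e, A e * ∑' fg : (Fin d → Bool) × (Fin d → Bool), B fg.1 * C fg.2 :=
        ENNReal.tsum_mul_right.symm
    _ = ∑' e, ∑' fg : (Fin d → Bool) × (Fin d → Bool), A e * (B fg.1 * C fg.2) :=
        tsum_congr fun e => ENNReal.tsum_mul_left.symm
    _ = _ := by
        rw [ENNReal.tsum_prod (f := fun e (fg : (Fin d → Bool) × (Fin d → Bool)) =>
          A e * B fg.1 * C fg.2)]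
        exact tsum_congr fun e => tsum_congr fun fg => (mul_assoc _ _ _).symm

lemma ae_locfin (E : Setting d S) : ∀ᵐ ω ∂E.P0, ∀ n : ℕ, hat ω (ballN d n) < ⊤ := by
  set A : Set (Cfg d S) := {ω | ¬ ∀ n : ℕ, hat ω (ballN d n) < ⊤} with hA
  have hAmeas : MeasurableSet A := by
    have : A = (⋂ n : ℕ, {ω : Cfg d S | hat ω (ballN d n) < ⊤})ᶜ := by
      ext ω
      simp [hA]
    rw [this]
    exact (MeasurableSet.iInter fun n =>
      measurableSet_lt (measurable_hat_apply (measurableSet_ballN _)) measurable_const).compl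
  have hz : (∫⁻ ω, ∫⁻ x in unitCube d,
      A.indicator (fun _ => (1 : ℝ≥0∞)) (shift x ω) ∂hat ω ∂E.P) = 0 := by
    have hae : ∀ᵐ ω ∂E.P, (∫⁻ x in unitCube d,
        A.indicator (fun _ => (1 : ℝ≥0∞)) (shift x ω) ∂hat ω) = 0 := by
      filter_upwards [E.config_ae] with ω hω
      have hind : ∀ x : Pt d, A.indicator (fun _ => (1 : ℝ≥0∞)) (shift x ω) = 0 := by
        intro x
        apply Set.indicator_of_notMem
        simp only [hA, Set.mem_setOf_eq, not_not]
        intro n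
        rw [hat_shift_apply x ω (measurableSet_ballN _)]
        refine lt_of_le_of_lt (measure_mono fun y hy => ?_)
          (hω.hat_ballN_lt_top ((n : ℝ) + ptNorm x))
        have ht := ptNorm_triangle (y - x) x
        rw [show y - x + x = y by abel] at ht
        have hy' : ptNorm (y - x) ≤ (n : ℝ) := hy
        show ptNorm y ≤ (n : ℝ) + ptNorm x
        linarith
      calc (∫⁻ x in unitCube d, A.indicator (fun _ => (1 : ℝ≥0∞)) (shift x ω) ∂hat ω)
          = ∫⁻ _x in unitCube d, (0 : ℝ≥0∞) ∂hat ω := lintegral_congr fun x => hind x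
        _ = 0 := lintegral_zero
    calc (∫⁻ ω, ∫⁻ x in unitCube d,
        A.indicator (fun _ => (1 : ℝ≥0∞)) (shift x ω) ∂hat ω ∂E.P)
        = ∫⁻ _ω, (0 : ℝ≥0∞) ∂E.P := lintegral_congr_ae hae
      _ = 0 := lintegral_zero
  have hpalm := E.palm A hAmeas
  rw [hz] at hpalm
  have hP0A : E.P0 A = 0 := by
    rcases mul_eq_zero.mp hpalm with hc | hc
    · exact absurd hc E.intensity_pos.ne'
    · exact hc
  rw [MeasureTheory.ae_iff]
  exact hP0A

/-- Step 1: a.e. bound for the inner Campbell integral. -/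
lemma step1 (E : Setting d S) (h : ℝ → ℝ) (hh : ∀ r, 0 ≤ h r)
    (hbound : ∀ (ω : Cfg d S) (u v : Fin d → ℤ) (x y : Pt d),
      inSupp ω x → inSupp ω y →
      (∀ i, (u i : ℝ) ≤ x i ∧ x i ≤ (u i : ℝ) + 1) →
      (∀ i, (v i : ℝ) ≤ y i ∧ y i ≤ (v i : ℝ) + 1) →
      E.c x y ω ≤ h (zdist u v)) :
    ∀ᵐ ω ∂E.P, (∫⁻ x in unitCube d, Lfun E (shift x ω) ∂hat ω)
      ≤ (∑' vw : (Fin d → ℤ) × (Fin d → ℤ),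
          (ENNReal.ofReal (h (zdist 0 vw.1)) * ENNReal.ofReal (h (zdist vw.1 vw.2)))
            * (hat ω (bigcube vw.1) * hat ω (bigcube vw.2))) * hat ω (unitCube d) := by
  filter_upwards [E.config_ae] with ω hω
  have hx1 : ∀ᵐ x ∂(hat ω).restrict (unitCube d), inSupp ω x :=
    ae_restrict_of_ae hω.ae_inSupp
  have hzc : ∀ x : Pt d, x ∈ unitCube d → ∀ v : Fin d → ℤ,
      hat (shift x ω) (zcube v) ≤ hat ω (bigcube v) := by
    intro x hxU v
    rw [hat_shift_apply x ω (measurableSet_zcube _)]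
    refine measure_mono fun y hy => fun i => ?_
    have h1 : (v i : ℝ) ≤ (y - x) i ∧ (y - x) i < (v i : ℝ) + 1 := hy i
    rw [Pi.sub_apply] at h1
    have hU := hxU i
    exact ⟨by linarith [h1.1, hU.1], by linarith [h1.2, hU.2]⟩
  have hbnd : ∀ᵐ x ∂(hat ω).restrict (unitCube d), Lfun E (shift x ω)
      ≤ ∑' vw : (Fin d → ℤ) × (Fin d → ℤ),
          (ENNReal.ofReal (h (zdist 0 vw.1)) * ENNReal.ofReal (h (zdist vw.1 vw.2)))
            * (hat ω (bigcube vw.1) * hat ω (bigcube vw.2)) := by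
    filter_upwards [hx1, ae_restrict_mem measurableSet_unitCube] with x hx hxU
    have hkey := key_bound E h hh hbound (inSupp_shift_zero.mpr hx) (hω.shift_ae_inSupp x)
    refine le_trans (Lfun_le_LL E _) (le_trans hkey ?_)
    refine ENNReal.tsum_le_tsum fun vw => ?_
    exact mul_le_mul_right (mul_le_mul' (hzc x hxU vw.1) (hzc x hxU vw.2)) _
  calc (∫⁻ x in unitCube d, Lfun E (shift x ω) ∂hat ω)
      ≤ ∫⁻ _x in unitCube d, (∑' vw : (Fin d → ℤ) × (Fin d → ℤ),
          (ENNReal.ofReal (h (zdist 0 vw.1)) * ENNReal.ofReal (h (zdist vw.1 vw.2)))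
            * (hat ω (bigcube vw.1) * hat ω (bigcube vw.2))) ∂hat ω :=
        lintegral_mono_ae hbnd
    _ = _ := setLIntegral_const _ _

end AuxMoments


section AuxFinal

open Set

variable {d : ℕ} {S : Type*} [MeasurableSpace S] [TopologicalSpace S] [PolishSpace S] [BorelSpace S]

lemma triple_big_moment_le (E : Setting d S) (v w : Fin d → ℤ) :
    ∫⁻ ω, hat ω (bigcube v) * hat ω (bigcube w) * hat ω (unitCube d) ∂E.P
      ≤ (Fintype.card ((Fin d → Bool) × (Fin d → Bool) × (Fin d → Bool)) : ℝ≥0∞)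
          * (3 * ∫⁻ ω, hat ω (unitCube d) ^ 3 ∂E.P) := by
  have hpt : ∀ ω : Cfg d S,
      hat ω (bigcube v) * hat ω (bigcube w) * hat ω (unitCube d)
        ≤ ∑' efg : (Fin d → Bool) × (Fin d → Bool) × (Fin d → Bool),
            hat ω (zcube (v + fun i => if efg.1 i then 1 else 0))
              * hat ω (zcube (w + fun i => if efg.2.1 i then 1 else 0))
              * hat ω (zcube (fun i => if efg.2.2 i then 1 else 0)) := by
    intro ω
    refine le_trans (mul_le_mul' (mul_le_mul' (Nbig_le ω v) (Nbig_le ω w)) (Ncube_le ω)) ?_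
    rw [tsum_triple_prod]
  have hmeas : ∀ efg : (Fin d → Bool) × (Fin d → Bool) × (Fin d → Bool),
      Measurable fun ω : Cfg d S =>
        hat ω (zcube (v + fun i => if efg.1 i then 1 else 0))
          * hat ω (zcube (w + fun i => if efg.2.1 i then 1 else 0))
          * hat ω (zcube (fun i => if efg.2.2 i then 1 else 0)) := fun efg =>
    ((measurable_hat_apply (measurableSet_zcube _)).mul
      (measurable_hat_apply (measurableSet_zcube _))).mul
      (measurable_hat_apply (measurableSet_zcube _))
  calc ∫⁻ ω, hat ω (bigcube v) * hat ω (bigcube w) * hat ω (unitCube d) ∂E.P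
      ≤ ∫⁻ ω, ∑' efg : (Fin d → Bool) × (Fin d → Bool) × (Fin d → Bool),
          hat ω (zcube (v + fun i => if efg.1 i then 1 else 0))
            * hat ω (zcube (w + fun i => if efg.2.1 i then 1 else 0))
            * hat ω (zcube (fun i => if efg.2.2 i then 1 else 0)) ∂E.P :=
        lintegral_mono hpt
    _ = ∑' efg : (Fin d → Bool) × (Fin d → Bool) × (Fin d → Bool),
        ∫⁻ ω, hat ω (zcube (v + fun i => if efg.1 i then 1 else 0))
          * hat ω (zcube (w + fun i => if efg.2.1 i then 1 else 0))
          * hat ω (zcube (fun i => if efg.2.2 i then 1 else 0)) ∂E.P :=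
        lintegral_tsum (fun efg => (hmeas efg).aemeasurable)
    _ ≤ ∑' _efg : (Fin d → Bool) × (Fin d → Bool) × (Fin d → Bool),
        (3 * ∫⁻ ω, hat ω (unitCube d) ^ 3 ∂E.P) :=
        ENNReal.tsum_le_tsum fun efg => triple_moment_le E _ _ _
    _ = _ := by
        rw [tsum_fintype, Finset.sum_const, Finset.card_univ, nsmul_eq_mul]

lemma coef_tsum (h : ℝ → ℝ) :
    (∑' vw : (Fin d → ℤ) × (Fin d → ℤ),
      ENNReal.ofReal (h (zdist 0 vw.1)) * ENNReal.ofReal (h (zdist vw.1 vw.2)))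
      = (∑' u : Fin d → ℤ, ENNReal.ofReal (h (zdist u 0)))
        * ∑' u : Fin d → ℤ, ENNReal.ofReal (h (zdist u 0)) := by
  rw [ENNReal.tsum_prod (f := fun v w =>
    ENNReal.ofReal (h (zdist 0 v)) * ENNReal.ofReal (h (zdist v w)))]
  calc (∑' v, ∑' w, ENNReal.ofReal (h (zdist 0 v)) * ENNReal.ofReal (h (zdist v w)))
      = ∑' v : Fin d → ℤ, ENNReal.ofReal (h (zdist 0 v))
          * ∑' w : Fin d → ℤ, ENNReal.ofReal (h (zdist v w)) :=
        tsum_congr fun v => ENNReal.tsum_mul_left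
    _ = ∑' v : Fin d → ℤ, ENNReal.ofReal (h (zdist 0 v))
          * ∑' u : Fin d → ℤ, ENNReal.ofReal (h (zdist u 0)) := by
        refine tsum_congr fun v => ?_
        congr 1
        rw [← Equiv.tsum_eq (Equiv.subLeft v) (fun w => ENNReal.ofReal (h (zdist v w)))]
        refine tsum_congr fun u => ?_
        simp only [Equiv.subLeft_apply, zdist_self_sub]
    _ = _ := by
        rw [ENNReal.tsum_mul_right]
        congr 1
        exact tsum_congr fun v => by rw [zdist_zero_comm]

end AuxFinal

section AuxStep2

variable {d : ℕ} {S : Type*} [MeasurableSpace S] [TopologicalSpace S] [PolishSpace S] [BorelSpace S]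

lemma step2 (E : Setting d S) (c1 : (Fin d → ℤ) × (Fin d → ℤ) → ℝ≥0∞) :
    (∫⁻ ω, (∑' vw : (Fin d → ℤ) × (Fin d → ℤ),
        c1 vw * (hat ω (bigcube vw.1) * hat ω (bigcube vw.2))) * hat ω (unitCube d) ∂E.P)
      ≤ (∑' vw : (Fin d → ℤ) × (Fin d → ℤ), c1 vw)
        * ((Fintype.card ((Fin d → Bool) × (Fin d → Bool) × (Fin d → Bool)) : ℝ≥0∞)
            * (3 * ∫⁻ ω, hat ω (unitCube d) ^ 3 ∂E.P)) := by
  have hmeasvw : ∀ vw : (Fin d → ℤ) × (Fin d → ℤ), Measurable fun ω : Cfg d S =>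
      c1 vw * (hat ω (bigcube vw.1) * hat ω (bigcube vw.2)) * hat ω (unitCube d) := fun vw =>
    (((measurable_hat_apply (measurableSet_bigcube _)).mul
        (measurable_hat_apply (measurableSet_bigcube _))).const_mul _).mul
      (measurable_hat_apply measurableSet_unitCube)
  calc (∫⁻ ω, (∑' vw : (Fin d → ℤ) × (Fin d → ℤ),
        c1 vw * (hat ω (bigcube vw.1) * hat ω (bigcube vw.2))) * hat ω (unitCube d) ∂E.P)
      = ∫⁻ ω, ∑' vw : (Fin d → ℤ) × (Fin d → ℤ),
          c1 vw * (hat ω (bigcube vw.1) * hat ω (bigcube vw.2)) * hat ω (unitCube d) ∂E.P := by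
        refine lintegral_congr fun ω => ?_
        exact ENNReal.tsum_mul_right.symm
    _ = ∑' vw : (Fin d → ℤ) × (Fin d → ℤ),
        ∫⁻ ω, c1 vw * (hat ω (bigcube vw.1) * hat ω (bigcube vw.2)) * hat ω (unitCube d) ∂E.P :=
        lintegral_tsum (μ := E.P) (f := fun vw (ω : Cfg d S) =>
          c1 vw * (hat ω (bigcube vw.1) * hat ω (bigcube vw.2)) * hat ω (unitCube d))
          (fun vw => (hmeasvw vw).aemeasurable)
    _ ≤ ∑' vw : (Fin d → ℤ) × (Fin d → ℤ),
        c1 vw * ((Fintype.card ((Fin d → Bool) × (Fin d → Bool) × (Fin d → Bool)) : ℝ≥0∞)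
          * (3 * ∫⁻ ω, hat ω (unitCube d) ^ 3 ∂E.P)) := by
        refine ENNReal.tsum_le_tsum fun vw => ?_
        have hmul : ∀ ω : Cfg d S,
            c1 vw * (hat ω (bigcube vw.1) * hat ω (bigcube vw.2)) * hat ω (unitCube d)
            = c1 vw * (hat ω (bigcube vw.1) * hat ω (bigcube vw.2) * hat ω (unitCube d)) :=
          fun ω => mul_assoc _ _ _
        rw [lintegral_congr hmul, lintegral_const_mul (f := fun ω : Cfg d S =>
            hat ω (bigcube vw.1) * hat ω (bigcube vw.2) * hat ω (unitCube d)) _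
          (((measurable_hat_apply (measurableSet_bigcube _)).mul
            (measurable_hat_apply (measurableSet_bigcube _))).mul
            (measurable_hat_apply measurableSet_unitCube))]
        exact mul_le_mul_right (triple_big_moment_le E vw.1 vw.2) _
    _ = _ := ENNReal.tsum_mul_right

end AuxStep2


/-- **Lemma 2.1(iv).** Suppose `c_{x,y}(ω) ≤ h(|u-v|)` for any `u,v ∈ ℤ^d` and
`x,y ∈ ω̂` with `x ∈ u + [0,1]^d`, `y ∈ v + [0,1]^d`. If `E[ω̂([0,1]^d)³] < ∞` and
`Σ_{u∈ℤ^d} h(|u|) < ∞`, then (A6) holds: `F_* ∈ L¹(P₀)`. -/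
theorem statement6
    {d : ℕ} {S : Type*} [MeasurableSpace S] [TopologicalSpace S] [PolishSpace S] [BorelSpace S]
    (E : Setting d S)
    (h : ℝ → ℝ) (hh : ∀ r, 0 ≤ h r)
    (hbound : ∀ (ω : Cfg d S) (u v : Fin d → ℤ) (x y : Pt d),
      inSupp ω x → inSupp ω y →
      (∀ i, (u i : ℝ) ≤ x i ∧ x i ≤ (u i : ℝ) + 1) →
      (∀ i, (v i : ℝ) ≤ y i ∧ y i ≤ (v i : ℝ) + 1) →
      E.c x y ω ≤ h (zdist u v))
    (hmom : (∫⁻ ω, hat ω (unitCube d) ^ 3 ∂E.P) ≠ ⊤)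
    (hsum : Summable fun u : Fin d → ℤ => h (zdist u 0)) :
    A6 E := by
  classical
  have hTSfin : (∑' u : Fin d → ℤ, ENNReal.ofReal (h (zdist u 0))) ≠ ⊤ := by
    rw [← ENNReal.ofReal_tsum_of_nonneg (fun u => hh _) hsum]
    exact ENNReal.ofReal_ne_top
  have hCBfin : ((Fintype.card ((Fin d → Bool) × (Fin d → Bool) × (Fin d → Bool)) : ℝ≥0∞)
      * (3 * ∫⁻ ω, hat ω (unitCube d) ^ 3 ∂E.P)) ≠ ⊤ :=
    ENNReal.mul_ne_top (ENNReal.natCast_ne_top _)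
      (ENNReal.mul_ne_top (by norm_num) hmom)
  have hRHS := le_trans (lintegral_mono_ae (step1 E h hh hbound))
    (step2 E (fun vw => ENNReal.ofReal (h (zdist 0 vw.1)) * ENNReal.ofReal (h (zdist vw.1 vw.2))))
  rw [coef_tsum h] at hRHS
  have hpalm := palm_mul_le E (measurable_Lfun E)
  have hfinP0 : (∫⁻ ω, Lfun E ω ∂E.P0) ≠ ⊤ := by
    intro hcon
    have hle := le_trans hpalm hRHS
    rw [hcon, ENNReal.mul_top E.intensity_pos.ne'] at hle
    exact (ENNReal.mul_ne_top (ENNReal.mul_ne_top hTSfin hTSfin) hCBfin) (top_le_iff.mp hle)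
  have hcongr : (fun ω => (Lfun E ω).toReal) =ᵐ[E.P0] E.Fstar := by
    filter_upwards [ae_locfin E, ae_lt_top (measurable_Lfun E) hfinP0] with ω hloc hlt
    have hLf : Lfun E ω = LL E ω := le_antisymm (Lfun_le_LL E ω) (LL_le_Lfun E hloc)
    rw [hLf]
    exact (Fstar_eq E hloc (by rw [← hLf]; exact hlt.ne)).symm
  have hint : Integrable (fun ω => (Lfun E ω).toReal) E.P0 := by
    refine ⟨((measurable_Lfun E).ennreal_toReal).aestronglyMeasurable, ?_⟩
    show (∫⁻ ω, ‖(Lfun E ω).toReal‖ₑ ∂E.P0) < ⊤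
    refine lt_of_le_of_lt (lintegral_mono fun ω => ?_) hfinP0.lt_top
    rw [Real.enorm_eq_ofReal ENNReal.toReal_nonneg]
    exact ENNReal.ofReal_toReal_le
  exact hint.congr hcongr

end RWMPP
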